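/- arXiv:1708.07492 — 3 statements merged into one kernel-verified Lean document; each statement's English description precedes it below -/
import Mathlib

section
/- Let n ≥ 1, let I be a nonempty subset of {1,…,n}, let r ∈ ℝⁿ satisfy r_j > 0 for j ∈ I and r_j = 0 for j ∉ I, and let λ ∈ ℤⁿ satisfy λ_j = 0 for all j ∈ I. Let (α_k) be a sequence of nonzero real numbers and (λ^k) a sequence in ℤⁿ. Then the following are equivalent. (A) There exist sequences (θ^k) in ℝⁿ and (x^k) in [0,∞)ⁿ such that, as k → ∞: α_k → 0; for each j ∈ I, α_k·exp(i·θ_j^k)·x_j^k → r_j in ℂ; for each j ∉ I, α_k·exp(i·θ_j^k)·x_j^k → 0 in ℂ; for each j ∈ I, λ_j^k − (α_k/2)·(x_j^k)² → 0; and for each j ∉ I, λ_j^k − (α_k/2)·(x_j^k)² → λ_j. (B) α_k → 0; for each j ∈ I, α_k·λ_j^k → r_j²/2; and for each j ∉ I, α_k·λ_j^k → 0 and α_k·(λ_j^k − λ_j) ≥ 0 for all sufficiently large k. -/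
/-!
Everything decouples coordinate by coordinate. Writing `z = α e^{iθ} x`, one has
`α λ = α (λ - α x² / 2) + |z|² / 2`, so (A) forces `α λ → r² / 2`; and since `λ^k_j - λ_j` is an
integer within `1/2` of `α x² / 2`, it eventually has the sign of `α` (or vanishes). Conversely,
when `α (λ^k_j - λ_j) ≥ 0` one takes `x = √(2 (λ^k_j - λ_j) / α)` and `θ ∈ {0, π}` according to the
sign of `α`, which makes `λ^k_j - α x² / 2 = λ_j` and `α e^{iθ} x = √(2 α (λ^k_j - λ_j)) → r_j`.
-/

open Filter Topology

lemma norm_ofReal_mul_exp_mul_ofReal {a x : ℝ} (θ : ℝ) (hx : 0 ≤ x) :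
    ‖(a : ℂ) * Complex.exp (Complex.I * θ) * x‖ = |a| * x := by
  rw [norm_mul, norm_mul, mul_comm Complex.I, Complex.norm_exp_ofReal_mul_I, Complex.norm_real,
    Complex.norm_real, Real.norm_eq_abs, Real.norm_eq_abs, abs_of_nonneg hx, mul_one]

lemma ofReal_mul_exp_sign_angle {a : ℝ} (ha : a ≠ 0) :
    (a : ℂ) * Complex.exp (Complex.I * ((if 0 < a then 0 else Real.pi : ℝ) : ℂ)) = (|a| : ℝ) := by
  split_ifs with h
  · simp [abs_of_pos h]
  · rw [mul_comm Complex.I, Complex.exp_pi_mul_I, abs_of_neg (lt_of_le_of_ne (not_lt.mp h) ha)]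
    push_cast
    ring

lemma abs_mul_sqrt_two_mul_div {a : ℝ} (d : ℝ) (ha : a ≠ 0) :
    |a| * √(2 * d / a) = √(2 * (a * d)) := by
  rw [← Real.sqrt_sq_eq_abs, ← Real.sqrt_mul (sq_nonneg a)]
  congr 1
  field_simp

lemma half_mul_sqrt_two_mul_div_sq {a d : ℝ} (ha : a ≠ 0) (h : 0 ≤ a * d) :
    a / 2 * √(2 * d / a) ^ 2 = d := by
  have hnonneg : 0 ≤ 2 * d / a := by
    rw [show 2 * d / a = 2 * (a * d) / a ^ 2 by field_simp]
    positivity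
  rw [Real.sq_sqrt hnonneg]
  field_simp

lemma mul_intCast_nonneg_of_abs_sub_lt {d : ℤ} {a t : ℝ} (ht : 0 ≤ t)
    (h : |(d : ℝ) - a * t| < 1 / 2) :
    0 ≤ a * d := by
  rw [abs_lt] at h
  rcases lt_trichotomy d 0 with hd | rfl | hd
  · have hd' : (d : ℝ) ≤ -1 := by exact_mod_cast Int.le_sub_one_of_lt hd
    have ha : a < 0 := by nlinarith
    nlinarith
  · simp
  · have hd' : (1 : ℝ) ≤ d := by exact_mod_cast hd
    have ha : 0 < a := by nlinarith
    nlinarith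

section Coordinate

variable {α : ℕ → ℝ} {m : ℕ → ℤ} {c : ℤ} {x : ℕ → ℝ}

lemma tendsto_mul_of_tendsto_sub_half_mul_sq {u : ℕ → ℝ} {b s : ℝ} (hα0 : Tendsto α atTop (𝓝 0))
    (hy : Tendsto (fun k => |α k| * x k) atTop (𝓝 s))
    (hu : Tendsto (fun k => u k - α k / 2 * x k ^ 2) atTop (𝓝 b)) :
    Tendsto (fun k => α k * u k) atTop (𝓝 (s ^ 2 / 2)) := by
  have h := (hα0.mul hu).add ((hy.pow 2).div_const 2)
  rw [zero_mul, zero_add] at h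
  refine h.congr fun k => ?_
  rw [mul_pow, sq_abs]
  ring

lemma eventually_mul_sub_nonneg_of_tendsto_sub_half_mul_sq
    (hm : Tendsto (fun k => (m k : ℝ) - α k / 2 * x k ^ 2) atTop (𝓝 (c : ℝ))) :
    ∀ᶠ k in atTop, 0 ≤ α k * (((m k - c : ℤ) : ℝ)) := by
  have hclose := (Metric.tendsto_nhds.mp hm) (1 / 2) (by norm_num)
  filter_upwards [hclose] with k hk
  refine mul_intCast_nonneg_of_abs_sub_lt (t := x k ^ 2 / 2) (by positivity) ?_
  rw [Real.dist_eq] at hk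
  convert hk using 2
  push_cast
  ring

lemma exists_orbit_approx_iff {ρ : ℝ} (hα0 : Tendsto α atTop (𝓝 0)) (hα : ∀ k, α k ≠ 0)
    (hρ : 0 ≤ ρ) :
    (∃ θ x : ℕ → ℝ, (∀ k, 0 ≤ x k) ∧
      Tendsto (fun k => (α k : ℂ) * Complex.exp (Complex.I * (θ k : ℂ)) * (x k : ℂ))
        atTop (𝓝 (ρ : ℂ)) ∧
      Tendsto (fun k => (m k : ℝ) - α k / 2 * x k ^ 2) atTop (𝓝 (c : ℝ))) ↔
    Tendsto (fun k => α k * (m k : ℝ)) atTop (𝓝 (ρ ^ 2 / 2)) ∧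
      ∀ᶠ k in atTop, 0 ≤ α k * (((m k - c : ℤ) : ℝ)) := by
  constructor
  · rintro ⟨θ, x, hx0, hz, hm⟩
    have hy : Tendsto (fun k => |α k| * x k) atTop (𝓝 |ρ|) := by
      simpa only [norm_ofReal_mul_exp_mul_ofReal _ (hx0 _), Complex.norm_real, Real.norm_eq_abs]
        using hz.norm
    exact ⟨by simpa only [sq_abs] using tendsto_mul_of_tendsto_sub_half_mul_sq hα0 hy hm,
      eventually_mul_sub_nonneg_of_tendsto_sub_half_mul_sq hm⟩
  · rintro ⟨hαm, hsign⟩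
    have hnonneg : ∀ᶠ k in atTop, 0 ≤ α k * ((m k : ℝ) - c) := by simpa using hsign
    refine ⟨fun k => if 0 < α k then 0 else Real.pi, fun k => √(2 * ((m k : ℝ) - c) / α k),
      fun k => Real.sqrt_nonneg _, ?_, ?_⟩
    · have hlim : Tendsto (fun k => √(2 * (α k * ((m k : ℝ) - c)))) atTop (𝓝 ρ) := by
        have h := ((hαm.sub (hα0.mul_const (c : ℝ))).const_mul 2).sqrt
        rw [zero_mul, sub_zero, mul_div_cancel₀ _ two_ne_zero, Real.sqrt_sq hρ] at h
        simpa only [mul_sub] using h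
      have hreal : Tendsto (fun k => |α k| * √(2 * ((m k : ℝ) - c) / α k)) atTop (𝓝 ρ) := by
        simpa only [abs_mul_sqrt_two_mul_div _ (hα _)] using hlim
      refine ((Complex.continuous_ofReal.tendsto ρ).comp hreal).congr fun k => ?_
      simp only [Function.comp_apply, Complex.ofReal_mul, ofReal_mul_exp_sign_angle (hα k)]
    · refine tendsto_const_nhds.congr' ?_
      filter_upwards [hnonneg] with k hk
      rw [half_mul_sqrt_two_mul_div_sq (hα k) hk]
      ring

end Coordinate

theorem orbit_convergence_criterion_general
    (n : ℕ) (I : Finset (Fin n))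
    (r : Fin n → ℝ) (hrI : ∀ j ∈ I, 0 < r j) (hrI' : ∀ j ∉ I, r j = 0)
    (Λ : Fin n → ℤ) (hΛ : ∀ j ∈ I, Λ j = 0)
    (α : ℕ → ℝ) (hα : ∀ k, α k ≠ 0) (Λk : ℕ → Fin n → ℤ) :
    (∃ θ : ℕ → Fin n → ℝ, ∃ x : ℕ → Fin n → ℝ,
      (∀ k j, 0 ≤ x k j) ∧
      Tendsto α atTop (𝓝 0) ∧
      (∀ j ∈ I, Tendsto (fun k => (α k : ℂ) * Complex.exp (Complex.I * (θ k j : ℂ)) * (x k j : ℂ))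
        atTop (𝓝 ((r j : ℂ)))) ∧
      (∀ j ∉ I, Tendsto (fun k => (α k : ℂ) * Complex.exp (Complex.I * (θ k j : ℂ)) * (x k j : ℂ))
        atTop (𝓝 0)) ∧
      (∀ j ∈ I, Tendsto (fun k => ((Λk k j : ℝ)) - α k / 2 * (x k j) ^ 2) atTop (𝓝 0)) ∧
      (∀ j ∉ I, Tendsto (fun k => ((Λk k j : ℝ)) - α k / 2 * (x k j) ^ 2) atTop
        (𝓝 ((Λ j : ℝ)))))
    ↔
    (Tendsto α atTop (𝓝 0) ∧
      (∀ j ∈ I, Tendsto (fun k => α k * ((Λk k j : ℝ))) atTop (𝓝 (r j ^ 2 / 2))) ∧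
      (∀ j ∉ I, Tendsto (fun k => α k * ((Λk k j : ℝ))) atTop (𝓝 0) ∧
        ∀ᶠ k in atTop, 0 ≤ α k * (((Λk k j - Λ j : ℤ) : ℝ)))) := by
  have hr : ∀ j, 0 ≤ r j := fun j => if hj : j ∈ I then (hrI j hj).le else (hrI' j hj).ge
  constructor
  · rintro ⟨θ, x, hx0, hα0, hzI, hzO, hmI, hmO⟩
    have key := fun j => (exists_orbit_approx_iff (m := (Λk · j)) (c := Λ j) hα0 hα (hr j)).1
      ⟨(θ · j), (x · j), (hx0 · j),
        if hj : j ∈ I then hzI j hj else by simpa [hrI' j hj] using hzO j hj,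
        if hj : j ∈ I then by simpa [hΛ j hj] using hmI j hj else hmO j hj⟩
    exact ⟨hα0, fun j _ => (key j).1, fun j hj => ⟨by simpa [hrI' j hj] using (key j).1, (key j).2⟩⟩
  · rintro ⟨hα0, hαΛI, hαΛO⟩
    have key : ∀ j, Tendsto (fun k => α k * (Λk k j : ℝ)) atTop (𝓝 (r j ^ 2 / 2)) ∧
        ∀ᶠ k in atTop, 0 ≤ α k * (((Λk k j - Λ j : ℤ) : ℝ)) := by
      intro j
      by_cases hj : j ∈ I
      · have hpos : 0 < r j ^ 2 / 2 := by have := hrI j hj; positivity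
        refine ⟨hαΛI j hj, ?_⟩
        filter_upwards [(hαΛI j hj).eventually (eventually_gt_nhds hpos)] with k hk
        simpa [hΛ j hj] using hk.le
      · exact ⟨by simpa [hrI' j hj] using (hαΛO j hj).1, (hαΛO j hj).2⟩
    choose θ x hx0 hz hm using fun j => (exists_orbit_approx_iff hα0 hα (hr j)).2 (key j)
    exact ⟨fun k j => θ j k, fun k j => x j k, fun k j => hx0 j k, hα0, fun j _ => hz j,
      fun j hj => by simpa [hrI' j hj] using hz j, fun j hj => by simpa [hΛ j hj] using hm j,
      fun j _ => hm j⟩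

/-- Theorem 3.1(1)(b): convergence criterion for a sequence of generic admissible coadjoint
orbits `O_{(λ^k, α_k)}` of the Heisenberg motion group `G_n = 𝕋ⁿ ⋉ ℍ_n` to converge to the
orbit `O_{λ,r}`. -/
theorem orbit_convergence_criterion
    (n : ℕ) (hn : 1 ≤ n) (I : Finset (Fin n)) (hI : I.Nonempty)
    (r : Fin n → ℝ) (hrI : ∀ j ∈ I, 0 < r j) (hrI' : ∀ j ∉ I, r j = 0)
    (Λ : Fin n → ℤ) (hΛ : ∀ j ∈ I, Λ j = 0)
    (α : ℕ → ℝ) (hα : ∀ k, α k ≠ 0) (Λk : ℕ → Fin n → ℤ) :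
    (∃ θ : ℕ → Fin n → ℝ, ∃ x : ℕ → Fin n → ℝ,
      (∀ k j, 0 ≤ x k j) ∧
      Tendsto α atTop (𝓝 0) ∧
      (∀ j ∈ I, Tendsto (fun k => (α k : ℂ) * Complex.exp (Complex.I * (θ k j : ℂ)) * (x k j : ℂ))
        atTop (𝓝 ((r j : ℂ)))) ∧
      (∀ j ∉ I, Tendsto (fun k => (α k : ℂ) * Complex.exp (Complex.I * (θ k j : ℂ)) * (x k j : ℂ))
        atTop (𝓝 0)) ∧
      (∀ j ∈ I, Tendsto (fun k => ((Λk k j : ℝ)) - α k / 2 * (x k j) ^ 2) atTop (𝓝 0)) ∧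
      (∀ j ∉ I, Tendsto (fun k => ((Λk k j : ℝ)) - α k / 2 * (x k j) ^ 2) atTop
        (𝓝 ((Λ j : ℝ)))))
    ↔
    (Tendsto α atTop (𝓝 0) ∧
      (∀ j ∈ I, Tendsto (fun k => α k * ((Λk k j : ℝ))) atTop (𝓝 (r j ^ 2 / 2))) ∧
      (∀ j ∉ I, Tendsto (fun k => α k * ((Λk k j : ℝ))) atTop (𝓝 0) ∧
        ∀ᶠ k in atTop, 0 ≤ α k * (((Λk k j - Λ j : ℤ) : ℝ)))) :=
  orbit_convergence_criterion_general n I r hrI hrI' Λ hΛ α hα Λk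
end

section
/- Let r > 0 and j, l ∈ ℤ. Let G : ℝ × ℂ → ℂ be continuous, 2π-periodic in its first variable, and suppose there is a compact set K ⊆ ℂ such that G(θ,z) = 0 for all θ whenever z ∉ K. Define Φ_j : ℂ → ℂ by Φ_j(z) := (1/(2π)) ∫₀^{2π} exp(−i·j·θ)·G(θ,z) dθ, and define Ĝ : ℝ × ℂ → ℂ by Ĝ(ψ,w) := ∫_ℂ exp(−i·Re(w·conj z))·G(ψ,z) dz. Then i^{l−j} · B[r,Φ_j](j,l) = (1/(2π)²) · ∫₀^{2π} ∫₀^{2π} exp(i·j·θ)·exp(−i·l·φ)·Ĝ(φ−θ, r·exp(i·φ)) dφ dθ. -/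
open MeasureTheory

/-- The Bessel-type matrix coefficient `B[r,h₀](j,l)`. -/
noncomputable def Bcoef (r : ℝ) (h₀ : ℂ → ℂ) (j l : ℤ) : ℂ :=
  ∑' q : ℕ,
    if 0 ≤ (q : ℤ) + l - j then
      (-1 : ℂ) ^ ((q : ℤ) + l - j).toNat *
        (((r / 2) ^ (2 * (q : ℤ) + l - j).toNat /
          ((Nat.factorial q) * (Nat.factorial ((q : ℤ) + l - j).toNat)) : ℝ) : ℂ) *
        ∫ z : ℂ, z ^ q * (starRingEnd ℂ z) ^ ((q : ℤ) + l - j).toNat * h₀ z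
    else 0

/-- The `j`-th Fourier coefficient in the first variable. -/
noncomputable def PhiCoef (G : ℝ → ℂ → ℂ) (j : ℤ) (z : ℂ) : ℂ :=
  (1 / (2 * Real.pi)) *
    ∫ θ in (0 : ℝ)..(2 * Real.pi), Complex.exp (-Complex.I * (j : ℂ) * (θ : ℂ)) * G θ z

/-- The partial Fourier transform `Ĝ(ψ,w) = ∫_ℂ exp(−i Re(w conj z)) G(ψ,z) dz`. -/
noncomputable def Ghat (G : ℝ → ℂ → ℂ) (ψ : ℝ) (w : ℂ) : ℂ :=
  ∫ z : ℂ, Complex.exp (-Complex.I * ((w * starRingEnd ℂ z).re : ℂ)) * G ψ z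

/-!
Unfolding `Ghat` and using the `2π`-periodicity of `G` in `θ`, the double integral becomes
`2π ∫ φ, e^{i(j-l)φ} ∫ z, exp (-i Re (r e^{iφ} z̄)) Φ_j(z)`. Since
`-i Re (r e^{iφ} z̄) = a e^{iφ} + b e^{-iφ}` with `a = -i r z̄ / 2` and `b = -i r z / 2`, expanding
both exponentials into power series shows that the `(j-l)`-th Fourier coefficient of the plane wave
is the Bessel series `∑_q a^(q+l-j) b^q / ((q+l-j)! q!)`. Integrating it term by term against the
continuous, compactly supported `Φ_j` gives `i^(l-j) B[r,Φ_j](j,l)`.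
-/

open Set Function

section Fubini

variable {E : Type*} [NormedAddCommGroup E]
  {Y : Type*} [TopologicalSpace Y] [T2Space Y] [SecondCountableTopology Y]
  [MeasurableSpace Y] [OpensMeasurableSpace Y]
  {ν : Measure Y} [IsFiniteMeasureOnCompacts ν] [SFinite ν]

theorem integrable_restrict_uIoc_prod_of_continuous {f : ℝ → Y → E} (hf : Continuous f.uncurry)
    {K : Set Y} (hK : IsCompact K) (hfK : ∀ x y, y ∉ K → f x y = 0) (a b : ℝ) :
    Integrable f.uncurry ((volume.restrict (uIoc a b)).prod ν) := by
  rw [← Measure.restrict_univ (μ := ν), Measure.prod_restrict, ← IntegrableOn]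
  refine IntegrableOn.mono_set ?_ (prod_mono uIoc_subset_uIcc subset_rfl)
  refine (hf.continuousOn.integrableOn_compact ((isCompact_uIcc (a := a) (b := b)).prod hK)
    ).of_forall_sdiff_eq_zero (measurableSet_uIcc.prod MeasurableSet.univ) fun p hp =>
      hfK p.1 p.2 fun hpK => hp.2 ⟨hp.1.1, hpK⟩

theorem intervalIntegral_integral_swap_of_continuous [NormedSpace ℝ E] {f : ℝ → Y → E}
    (hf : Continuous f.uncurry) {K : Set Y} (hK : IsCompact K) (hfK : ∀ x y, y ∉ K → f x y = 0)
    (a b : ℝ) :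
    ∫ x in a..b, ∫ y, f x y ∂ν = ∫ y, (∫ x in a..b, f x y) ∂ν :=
  intervalIntegral_integral_swap (integrable_restrict_uIoc_prod_of_continuous hf hK hfK a b)

end Fubini

theorem intervalIntegral_intervalIntegral_swap_of_continuous {E : Type*} [NormedAddCommGroup E]
    [NormedSpace ℝ E] {f : ℝ → ℝ → E} (hf : Continuous f.uncurry) (a b c d : ℝ) :
    ∫ x in a..b, ∫ y in c..d, f x y = ∫ y in c..d, ∫ x in a..b, f x y :=
  intervalIntegral_intervalIntegral_swap <|
    (hf.continuousOn.integrableOn_compact (isCompact_uIcc.prod isCompact_uIcc)).mono_set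
      (prod_mono uIoc_subset_uIcc uIoc_subset_uIcc)

theorem continuous_integral_of_forall_compl_eq_zero {E : Type*} [NormedAddCommGroup E]
    [NormedSpace ℝ E] {X : Type*} [TopologicalSpace X] [FirstCountableTopology X]
    [LocallyCompactSpace X] {Y : Type*} [TopologicalSpace Y] [MeasurableSpace Y]
    [OpensMeasurableSpace Y] [SecondCountableTopologyEither Y E] {ν : Measure Y}
    [IsLocallyFiniteMeasure ν] {f : X → Y → E} (hf : Continuous f.uncurry)
    {K : Set Y} (hK : IsCompact K) (hfK : ∀ x y, y ∉ K → f x y = 0) :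
    Continuous fun x => ∫ y, f x y ∂ν := by
  have hset : (fun x => ∫ y, f x y ∂ν) = fun x => ∫ y in K, f x y ∂ν := funext fun x =>
    (setIntegral_eq_integral_of_forall_compl_eq_zero (hfK x)).symm
  rw [hset]
  exact continuous_parametric_integral_of_continuous hf hK

theorem integral_mul_tsum_of_norm_le {𝕜 : Type*} [RCLike 𝕜] {α : Type*} [MeasurableSpace α]
    {μ : Measure α} {h : α → 𝕜} (hh : Integrable h μ) {f : ℕ → α → 𝕜}
    (hf : ∀ n, AEStronglyMeasurable (f n) μ) {u : ℕ → ℝ} (hu : Summable u)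
    (hfu : ∀ n x, h x ≠ 0 → ‖f n x‖ ≤ u n) :
    ∫ x, h x * ∑' n, f n x ∂μ = ∑' n, ∫ x, h x * f n x ∂μ := by
  have hbound : ∀ n x, ‖h x * f n x‖ ≤ u n * ‖h x‖ := fun n x => by
    by_cases hx : h x = 0
    · simp [hx]
    · rw [norm_mul, mul_comm]
      exact mul_le_mul_of_nonneg_right (hfu n x hx) (norm_nonneg _)
  have hint : ∀ n, Integrable (fun x => h x * f n x) μ := fun n =>
    (hh.norm.const_mul (u n)).mono' (hh.aestronglyMeasurable.mul (hf n))
      (ae_of_all _ (hbound n))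
  have hsum : Summable fun n => ∫ x, ‖h x * f n x‖ ∂μ :=
    (hu.mul_right (∫ x, ‖h x‖ ∂μ)).of_nonneg_of_le
      (fun n => integral_nonneg fun _ => norm_nonneg _) fun n => by
        rw [← integral_const_mul]
        exact integral_mono (hint n).norm (hh.norm.const_mul _) (hbound n)
  simp_rw [← tsum_mul_left]
  exact (integral_tsum_of_summable_integral_norm hint hsum).symm

namespace Complex

open scoped Nat

theorem exp_eq_tsum_pow_div_factorial (x : ℂ) : exp x = ∑' n : ℕ, x ^ n / n ! := by
  rw [exp_eq_exp_ℂ, NormedSpace.exp_eq_tsum_div]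

theorem intervalIntegral_exp_int_mul_I (k : ℤ) :
    ∫ θ in (0 : ℝ)..(2 * Real.pi), exp (I * k * θ) =
      if k = 0 then ((2 * Real.pi : ℝ) : ℂ) else 0 := by
  rcases eq_or_ne k 0 with rfl | hk
  · simp
  · rw [if_neg hk, integral_exp_mul_complex (mul_ne_zero I_ne_zero (Int.cast_ne_zero.2 hk))]
    have : I * k * ((2 * Real.pi : ℝ) : ℂ) = k * (2 * Real.pi * I) := by push_cast; ring
    rw [this, exp_int_mul_two_pi_mul_I]
    simp

/-- The `m`-th Taylor coefficient of `w ↦ exp (a * w)`, extended by zero to negative `m`. -/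
noncomputable def expCoeff (a : ℂ) (m : ℤ) : ℂ :=
  if 0 ≤ m then a ^ m.toNat / m.toNat ! else 0

theorem norm_expCoeff_le (a : ℂ) (m : ℤ) : ‖expCoeff a m‖ ≤ Real.exp ‖a‖ := by
  unfold expCoeff
  split_ifs
  · simpa [norm_div, norm_pow] using Real.pow_div_factorial_le_exp _ (norm_nonneg a) m.toNat
  · simpa using (Real.exp_pos _).le

theorem intervalIntegral_exp_int_mul_I_mul_exp_mul_exp (k : ℤ) (a : ℂ) :
    ∫ θ in (0 : ℝ)..(2 * Real.pi), exp (I * k * θ) * exp (a * exp (I * θ)) =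
      2 * Real.pi * expCoeff a (-k) := by
  have h2pi : (0 : ℝ) ≤ 2 * Real.pi := by positivity
  have hterm : ∀ m : ℕ,
      ∫ θ in Ioc 0 (2 * Real.pi), exp (I * k * θ) * ((a * exp (I * θ)) ^ m / m !) =
        a ^ m / m ! * if k + m = 0 then ((2 * Real.pi : ℝ) : ℂ) else 0 := fun m => by
    have : ∀ θ : ℝ, exp (I * k * θ) * ((a * exp (I * θ)) ^ m / m !) =
        a ^ m / m ! * exp (I * ((k + m : ℤ) : ℂ) * θ) := fun θ => by
      rw [mul_pow, ← exp_nat_mul, mul_div_right_comm, mul_left_comm, ← exp_add]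
      push_cast
      ring_nf
    simp_rw [this, integral_const_mul, ← intervalIntegral.integral_of_le h2pi,
      intervalIntegral_exp_int_mul_I]
  simp_rw [exp_eq_tsum_pow_div_factorial (a * exp (I * _)), intervalIntegral.integral_of_le h2pi]
  rw [integral_mul_tsum_of_norm_le
    (by fun_prop : Continuous fun θ : ℝ => exp (I * k * θ)).integrableOn_Ioc
    (fun m => by fun_prop) (Real.summable_pow_div_factorial ‖a‖) fun m θ _ => by
      simp [norm_pow, norm_exp_I_mul_ofReal]]
  simp_rw [hterm]
  unfold expCoeff
  split_ifs with hk
  · rw [tsum_eq_single (-k).toNat fun m hm => by rw [if_neg (by omega), mul_zero]]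
    rw [if_pos (by omega)]
    push_cast; ring
  · rw [mul_zero]
    exact (tsum_congr fun m => by rw [if_neg (by omega), mul_zero]).trans tsum_zero


theorem intervalIntegral_exp_int_mul_I_mul_exp_add_exp (k : ℤ) (a b : ℂ) :
    ∫ θ in (0 : ℝ)..(2 * Real.pi),
        exp (I * k * θ) * exp (a * exp (I * θ) + b * exp (-(I * θ))) =
      2 * Real.pi * ∑' n : ℕ, expCoeff a (n - k) * (b ^ n / n !) := by
  have h2pi : (0 : ℝ) ≤ 2 * Real.pi := by positivity
  have hterm : ∀ n : ℕ, ∫ θ in Ioc 0 (2 * Real.pi),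
      exp (I * k * θ) * exp (a * exp (I * θ)) * ((b * exp (-(I * θ))) ^ n / n !) =
        2 * Real.pi * (expCoeff a (n - k) * (b ^ n / n !)) := fun n => by
    have : ∀ θ : ℝ,
        exp (I * k * θ) * exp (a * exp (I * θ)) * ((b * exp (-(I * θ))) ^ n / n !) =
          b ^ n / n ! * (exp (I * ((k - n : ℤ) : ℂ) * θ) * exp (a * exp (I * θ))) := fun θ => by
      rw [mul_pow, ← exp_nat_mul, show ((k - n : ℤ) : ℂ) = k - n by push_cast; ring]
      rw [show I * (k - n) * θ = I * k * θ + n * -(I * θ) by ring, exp_add]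
      ring
    simp_rw [this, integral_const_mul, ← intervalIntegral.integral_of_le h2pi,
      intervalIntegral_exp_int_mul_I_mul_exp_mul_exp, neg_sub]
    ring
  simp_rw [exp_add, ← mul_assoc, exp_eq_tsum_pow_div_factorial (b * exp (-(I * _))),
    intervalIntegral.integral_of_le h2pi]
  rw [integral_mul_tsum_of_norm_le
    (by fun_prop : Continuous fun θ : ℝ =>
      exp (I * k * θ) * exp (a * exp (I * θ))).integrableOn_Ioc
    (fun n => by fun_prop) (Real.summable_pow_div_factorial ‖b‖) fun n θ _ => by
      simp [norm_pow, norm_exp]]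
  simp_rw [hterm]
  exact tsum_mul_left

end Complex

open Complex

noncomputable def planeWave (w z : ℂ) : ℂ :=
  exp (-I * ((w * starRingEnd ℂ z).re : ℂ))

theorem Ghat_eq_integral_planeWave (G : ℝ → ℂ → ℂ) (ψ : ℝ) (w : ℂ) :
    Ghat G ψ w = ∫ z, planeWave w z * G ψ z :=
  rfl

@[fun_prop]
theorem continuous_planeWave : Continuous fun p : ℂ × ℂ => planeWave p.1 p.2 := by
  unfold planeWave
  fun_prop

section BesselSeries

open scoped Nat

/-- The terms of the Bessel series of the `k`-th Fourier coefficient of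
`θ ↦ planeWave (r * exp (I * θ)) z`. -/
noncomputable def besselSeriesTerm (r : ℝ) (k : ℤ) (z : ℂ) (n : ℕ) : ℂ :=
  expCoeff (-I * r * starRingEnd ℂ z / 2) (n - k) * ((-I * r * z / 2) ^ n / n !)

theorem planeWave_ofReal_mul_exp (r θ : ℝ) (z : ℂ) :
    planeWave (r * exp (I * θ)) z =
      exp (-I * r * starRingEnd ℂ z / 2 * exp (I * θ) + -I * r * z / 2 * exp (-(I * θ))) := by
  have hre : ∀ w : ℂ, (w.re : ℂ) = (w + starRingEnd ℂ w) / 2 := fun w => by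
    rw [add_conj]; push_cast; ring
  have hconj : starRingEnd ℂ (exp (I * θ)) = exp (-(I * θ)) := by
    rw [← exp_conj, map_mul, conj_I, conj_ofReal, neg_mul]
  rw [planeWave, hre, map_mul, map_mul, conj_conj, conj_ofReal, hconj]
  ring_nf

theorem intervalIntegral_exp_int_mul_I_mul_planeWave (r : ℝ) (k : ℤ) (z : ℂ) :
    ∫ θ in (0 : ℝ)..(2 * Real.pi), exp (I * k * θ) * planeWave (r * exp (I * θ)) z =
      2 * Real.pi * ∑' n, besselSeriesTerm r k z n := by
  simp_rw [planeWave_ofReal_mul_exp]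
  exact intervalIntegral_exp_int_mul_I_mul_exp_add_exp k _ _

theorem continuous_besselSeriesTerm (r : ℝ) (k : ℤ) (n : ℕ) :
    Continuous fun z => besselSeriesTerm r k z n := by
  unfold besselSeriesTerm expCoeff
  split_ifs <;> fun_prop

theorem norm_besselSeriesTerm_le (r : ℝ) (k : ℤ) {z : ℂ} {R : ℝ} (hz : ‖z‖ ≤ R) (n : ℕ) :
    ‖besselSeriesTerm r k z n‖ ≤ Real.exp (|r| * R / 2) * ((|r| * R / 2) ^ n / n !) := by
  have hnorm : ∀ w : ℂ, ‖w‖ = ‖z‖ → ‖-I * r * w / 2‖ ≤ |r| * R / 2 := fun w hw => by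
    rw [norm_div, norm_mul, norm_mul, norm_neg, norm_I, one_mul, norm_real, Real.norm_eq_abs, hw,
      RCLike.norm_ofNat]
    gcongr
  rw [besselSeriesTerm, norm_mul, norm_div, norm_pow, RCLike.norm_natCast]
  gcongr
  · exact (norm_expCoeff_le _ _).trans (Real.exp_le_exp.2 (hnorm _ (RCLike.norm_conj z)))
  · exact hnorm z rfl

theorem intervalIntegral_exp_int_mul_I_mul_integral_planeWave_mul (r : ℝ) (k : ℤ) {h : ℂ → ℂ}
    (hh : Continuous h) {K : Set ℂ} (hK : IsCompact K) (hhK : ∀ z, z ∉ K → h z = 0) :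
    ∫ θ in (0 : ℝ)..(2 * Real.pi), exp (I * k * θ) * ∫ z, planeWave (r * exp (I * θ)) z * h z =
      2 * Real.pi * ∑' n, ∫ z, h z * besselSeriesTerm r k z n := by
  obtain ⟨R, -, hR⟩ := hK.isBounded.exists_pos_norm_le
  simp_rw [← integral_const_mul]
  rw [intervalIntegral_integral_swap_of_continuous (by fun_prop) hK
    fun θ z hz => by rw [hhK z hz, mul_zero, mul_zero]]
  have hinner : ∀ z, ∫ θ in (0 : ℝ)..(2 * Real.pi),
      exp (I * k * θ) * (planeWave (r * exp (I * θ)) z * h z) =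
        2 * Real.pi * (h z * ∑' n, besselSeriesTerm r k z n) := fun z => by
    simp_rw [← mul_assoc, intervalIntegral.integral_mul_const,
      intervalIntegral_exp_int_mul_I_mul_planeWave]
    ring
  simp_rw [hinner, integral_const_mul]
  rw [integral_mul_tsum_of_norm_le (hh.integrable_of_hasCompactSupport (.intro hK hhK))
    (fun n => (continuous_besselSeriesTerm r k n).aestronglyMeasurable)
    ((Real.summable_pow_div_factorial _).mul_left _) fun n z hz =>
      norm_besselSeriesTerm_le r k (hR z (by_contra fun hzK => hz (hhK z hzK))) n]

theorem I_zpow_mul_Bcoef (r : ℝ) (h : ℂ → ℂ) (j l : ℤ) :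
    I ^ (l - j) * Bcoef r h j l = ∑' n, ∫ z, h z * besselSeriesTerm r (j - l) z n := by
  rw [Bcoef, ← tsum_mul_left]
  refine tsum_congr fun q => ?_
  have hqt : (q : ℤ) - (j - l) = q + l - j := by ring
  simp only [besselSeriesTerm, expCoeff, hqt]
  split_ifs with hq
  · obtain ⟨t, ht⟩ : ∃ t : ℕ, (q : ℤ) + l - j = t := ⟨_, (Int.toNat_of_nonneg hq).symm⟩
    have h2q : (2 * (q : ℤ) + l - j).toNat = t + q := by omega
    have hI : I ^ (l - j) * (-1) ^ t = (-I) ^ t * (-I) ^ q := by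
      rw [show l - j = (t : ℤ) - q by omega, zpow_sub₀ I_ne_zero, zpow_natCast, zpow_natCast,
        neg_pow I t, ← inv_I, inv_pow]
      ring
    have hpt : ∀ z,
        h z * ((-I * r * starRingEnd ℂ z / 2) ^ t / t ! * ((-I * r * z / 2) ^ q / q !)) =
          (-I) ^ t * (-I) ^ q * ((r / 2) ^ (t + q) / (q ! * t !) : ℝ) *
          (z ^ q * starRingEnd ℂ z ^ t * h z) := fun z => by
      have hr : ∀ w : ℂ, -I * r * w / 2 = -I * ((r / 2 : ℝ) : ℂ) * w := fun w => by
        push_cast; ring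
      simp only [hr, mul_pow, pow_add]
      push_cast
      ring
    simp_rw [ht, Int.toNat_natCast, h2q, hpt, integral_const_mul, ← hI]
    ring
  · simp

end BesselSeries

theorem intervalIntegral_exp_mul_comp_sub {g : ℝ → ℂ} (hg : Periodic g (2 * Real.pi)) (j : ℤ)
    (φ : ℝ) :
    ∫ θ in (0 : ℝ)..(2 * Real.pi), exp (I * j * θ) * g (φ - θ) =
      exp (I * j * φ) * ∫ ψ in (0 : ℝ)..(2 * Real.pi), exp (-I * j * ψ) * g ψ := by
  have hF : Periodic (fun ψ : ℝ => exp (-I * j * ψ) * g ψ) (2 * Real.pi) := fun ψ => by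
    have : -I * j * ((ψ + 2 * Real.pi : ℝ) : ℂ) = -I * j * ψ + (-j : ℤ) * (2 * Real.pi * I) := by
      push_cast; ring
    dsimp only
    rw [hg, this, exp_add, exp_int_mul_two_pi_mul_I, mul_one]
  have hθ : ∀ θ : ℝ, exp (I * j * θ) * g (φ - θ) =
      exp (I * j * φ) * (exp (-I * j * ((φ - θ : ℝ) : ℂ)) * g (φ - θ)) := fun θ => by
    rw [← mul_assoc, ← exp_add]
    push_cast
    ring_nf
  simp_rw [hθ, intervalIntegral.integral_const_mul,
    intervalIntegral.integral_comp_sub_left (fun ψ => exp (-I * j * ψ) * g ψ)]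
  simpa using congrArg (exp (I * j * φ) * ·) (hF.intervalIntegral_add_eq (φ - 2 * Real.pi) 0)

section FourierCoefficients

variable {G : ℝ → ℂ → ℂ} {K : Set ℂ}

theorem PhiCoef_eq_zero (hsupp : ∀ θ z, z ∉ K → G θ z = 0) (j : ℤ) {z : ℂ} (hz : z ∉ K) :
    PhiCoef G j z = 0 := by
  simp [PhiCoef, hsupp _ z hz]

theorem continuous_PhiCoef (hG : Continuous fun p : ℝ × ℂ => G p.1 p.2) (j : ℤ) :
    Continuous (PhiCoef G j) :=
  continuous_const.mul <| intervalIntegral.continuous_parametric_intervalIntegral_of_continuous'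
    (by fun_prop) _ _

theorem intervalIntegral_exp_mul_eq_two_pi_mul_PhiCoef (G : ℝ → ℂ → ℂ) (j : ℤ) (z : ℂ) :
    ∫ θ in (0 : ℝ)..(2 * Real.pi), exp (-I * j * θ) * G θ z = 2 * Real.pi * PhiCoef G j z := by
  rw [PhiCoef]
  field_simp

theorem Ghat_periodic (hper : ∀ θ z, G (θ + 2 * Real.pi) z = G θ z) (w : ℂ) :
    Periodic (fun ψ => Ghat G ψ w) (2 * Real.pi) := fun ψ => by
  simp only [Ghat, hper]

theorem continuous_Ghat (hG : Continuous fun p : ℝ × ℂ => G p.1 p.2) (hK : IsCompact K)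
    (hsupp : ∀ θ z, z ∉ K → G θ z = 0) : Continuous fun p : ℝ × ℂ => Ghat G p.1 p.2 := by
  have hf : Continuous (uncurry fun (p : ℝ × ℂ) (z : ℂ) => planeWave p.2 z * G p.1 z) :=
    (continuous_planeWave.comp (continuous_fst.snd.prodMk continuous_snd)).mul
      (hG.comp (continuous_fst.fst.prodMk continuous_snd))
  exact continuous_integral_of_forall_compl_eq_zero hf hK fun p z hz => by
    rw [hsupp _ _ hz, mul_zero]

theorem intervalIntegral_exp_mul_Ghat (hG : Continuous fun p : ℝ × ℂ => G p.1 p.2)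
    (hK : IsCompact K) (hsupp : ∀ θ z, z ∉ K → G θ z = 0) (j : ℤ) (w : ℂ) :
    ∫ ψ in (0 : ℝ)..(2 * Real.pi), exp (-I * j * ψ) * Ghat G ψ w =
      2 * Real.pi * ∫ z, planeWave w z * PhiCoef G j z := by
  simp_rw [Ghat_eq_integral_planeWave, ← integral_const_mul]
  rw [intervalIntegral_integral_swap_of_continuous
    (by fun_prop) hK fun ψ z hz => by rw [hsupp _ _ hz, mul_zero, mul_zero]]
  simp_rw [mul_left_comm _ (planeWave w _), intervalIntegral.integral_const_mul,
    intervalIntegral_exp_mul_eq_two_pi_mul_PhiCoef]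

theorem intervalIntegral_intervalIntegral_exp_mul_Ghat
    (hG : Continuous fun p : ℝ × ℂ => G p.1 p.2) (hper : ∀ θ z, G (θ + 2 * Real.pi) z = G θ z)
    (hK : IsCompact K) (hsupp : ∀ θ z, z ∉ K → G θ z = 0) (r : ℝ) (j l : ℤ) :
    ∫ θ in (0 : ℝ)..(2 * Real.pi), ∫ φ in (0 : ℝ)..(2 * Real.pi),
        exp (I * j * θ) * exp (-I * l * φ) * Ghat G (φ - θ) (r * exp (I * φ)) =
      2 * Real.pi * ∫ φ in (0 : ℝ)..(2 * Real.pi),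
        exp (I * (j - l : ℤ) * φ) * ∫ z, planeWave (r * exp (I * φ)) z * PhiCoef G j z := by
  have hGhat := continuous_Ghat hG hK hsupp
  rw [intervalIntegral_intervalIntegral_swap_of_continuous (by fun_prop)]
  have hφ : ∀ φ : ℝ, ∫ θ in (0 : ℝ)..(2 * Real.pi),
      exp (I * j * θ) * exp (-I * l * φ) * Ghat G (φ - θ) (r * exp (I * φ)) =
        2 * Real.pi * (exp (I * (j - l : ℤ) * φ) *
          ∫ z, planeWave (r * exp (I * φ)) z * PhiCoef G j z) := fun φ => by
    simp_rw [mul_right_comm _ (exp (-I * l * φ)), intervalIntegral.integral_mul_const,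
      intervalIntegral_exp_mul_comp_sub (Ghat_periodic hper _),
      intervalIntegral_exp_mul_Ghat hG hK hsupp]
    rw [show exp (I * (j - l : ℤ) * φ) = exp (I * j * φ) * exp (-I * l * φ) by
      rw [← exp_add]; push_cast; ring_nf]
    ring
  simp_rw [hφ, intervalIntegral.integral_const_mul]

end FourierCoefficients

theorem Bcoef_eq_double_circle_integral_general
    (r : ℝ) (j l : ℤ) (G : ℝ → ℂ → ℂ)
    (hG : Continuous fun p : ℝ × ℂ => G p.1 p.2)
    (hper : ∀ θ z, G (θ + 2 * Real.pi) z = G θ z)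
    (K : Set ℂ) (hK : IsCompact K) (hsupp : ∀ θ z, z ∉ K → G θ z = 0) :
    Complex.I ^ (l - j) * Bcoef r (PhiCoef G j) j l =
      ((1 / (2 * Real.pi) ^ 2 : ℝ) : ℂ) *
        ∫ θ in (0 : ℝ)..(2 * Real.pi), ∫ φ in (0 : ℝ)..(2 * Real.pi),
          Complex.exp (Complex.I * (j : ℂ) * (θ : ℂ)) *
          Complex.exp (-Complex.I * (l : ℂ) * (φ : ℂ)) *
          Ghat G (φ - θ) ((r : ℂ) * Complex.exp (Complex.I * (φ : ℂ))) := by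
  rw [intervalIntegral_intervalIntegral_exp_mul_Ghat hG hper hK hsupp,
    intervalIntegral_exp_int_mul_I_mul_integral_planeWave_mul r (j - l) (continuous_PhiCoef hG j)
      hK fun z hz => PhiCoef_eq_zero hsupp j hz,
    I_zpow_mul_Bcoef]
  push_cast
  field_simp

/-- Lemma 4.1 (second part): the Bessel-function expansion of the matrix coefficients
`⟨π_r(F) χ_j, χ_l⟩` of the representation `π_r` of `G_1 = 𝕋 ⋉ ℍ_1`. -/
theorem Bcoef_eq_double_circle_integral
    (r : ℝ) (hr : 0 < r) (j l : ℤ) (G : ℝ → ℂ → ℂ)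
    (hG : Continuous fun p : ℝ × ℂ => G p.1 p.2)
    (hper : ∀ θ z, G (θ + 2 * Real.pi) z = G θ z)
    (K : Set ℂ) (hK : IsCompact K) (hsupp : ∀ θ z, z ∉ K → G θ z = 0) :
    Complex.I ^ (l - j) * Bcoef r (PhiCoef G j) j l =
      ((1 / (2 * Real.pi) ^ 2 : ℝ) : ℂ) *
        ∫ θ in (0 : ℝ)..(2 * Real.pi), ∫ φ in (0 : ℝ)..(2 * Real.pi),
          Complex.exp (Complex.I * (j : ℂ) * (θ : ℂ)) *
          Complex.exp (-Complex.I * (l : ℂ) * (φ : ℂ)) *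
          Ghat G (φ - θ) ((r : ℂ) * Complex.exp (Complex.I * (φ : ℂ))) :=
  Bcoef_eq_double_circle_integral_general r j l G hG hper K hK hsupp
end

section
/- Let G be a locally compact, second-countable topological group with left Haar measure μ_G, and let A be a locally compact, second-countable abelian topological group with Haar measure μ_A. Let F : G × A → ℂ be continuous with compact support. For each continuous character χ of A (i.e., each element of the Pontryagin dual of A, equipped with the compact-open topology), define F̂^A(χ) : G → ℂ by F̂^A(χ)(g) := ∫_A F(g,a)·χ(a) dμ_A(a). Then F̂^A(χ) belongs to L¹(G, μ_G) for every χ, and the map χ ↦ F̂^A(χ) from the Pontryagin dual of A to L¹(G, μ_G) is continuous. -/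
/-!
Write `F̂ χ g = ∫ F(g, a) χ(a) da`. Since evaluation of characters is jointly continuous on
`Â × A`, the integrand is jointly continuous in `(χ, g, a)` and vanishes for `a` outside the
compact projection of `supp F` to `A`; integrals of such families depend continuously on the
parameter, so `(χ, g) ↦ F̂ χ g` is continuous, and it vanishes for `g` outside the compact
projection of `supp F` to `G`. Applying the same principle once more, now integrating over `G`,
shows that `χ ↦ ‖F̂ χ - F̂ χ₀‖₁` is continuous; it vanishes at `χ₀`.
-/

open MeasureTheory Function

theorem PontryaginDual.continuous_eval (A : Type*) [Monoid A] [TopologicalSpace A]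
    [LocallyCompactSpace A] : Continuous fun p : PontryaginDual A × A => p.1 p.2 :=
  (ContinuousEval.continuous_eval (F := C(A, Circle))).comp
    ((ContinuousMonoidHom.isInducing_toContinuousMap A Circle).continuous.prodMap continuous_id)

section Slices

variable {X Y M : Type*} [TopologicalSpace X] [TopologicalSpace Y] [Zero M] {F : X × Y → M}
  {x : X × Y}

theorem apply_eq_zero_of_fst_notMem_image_tsupport (hx : x.1 ∉ Prod.fst '' tsupport F) :
    F x = 0 :=
  image_eq_zero_of_notMem_tsupport fun h => hx ⟨x, h, rfl⟩

theorem apply_eq_zero_of_snd_notMem_image_tsupport (hx : x.2 ∉ Prod.snd '' tsupport F) :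
    F x = 0 :=
  image_eq_zero_of_notMem_tsupport fun h => hx ⟨x, h, rfl⟩

end Slices

section PartialFourierTransform

variable {G A : Type*} [TopologicalSpace A] [Monoid A] [MeasurableSpace A] (μA : Measure A)
  (F : G × A → ℂ)

noncomputable def partialFourierTransform (χ : PontryaginDual A) (g : G) : ℂ :=
  ∫ a, F (g, a) * χ a ∂μA

variable [TopologicalSpace G] {F}

theorem partialFourierTransform_eq_zero_of_notMem {g : G} (hg : g ∉ Prod.fst '' tsupport F)
    (χ : PontryaginDual A) : partialFourierTransform μA F χ g = 0 := by
  simp [partialFourierTransform, apply_eq_zero_of_fst_notMem_image_tsupport (x := (g, _)) hg]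

variable [LocallyCompactSpace A] [OpensMeasurableSpace A] [IsFiniteMeasureOnCompacts μA]

theorem continuous_partialFourierTransform (hF : Continuous F) (hFc : HasCompactSupport F) :
    Continuous (uncurry (partialFourierTransform μA F)) := by
  rw [← continuousOn_univ]
  refine continuousOn_integral_of_compact_support (hFc.image continuous_snd) ?_ ?_
  · refine (hF.comp ?_ |>.mul ?_).continuousOn
    · fun_prop
    · exact continuous_subtype_val.comp ((PontryaginDual.continuous_eval A).comp
        (by fun_prop : Continuous fun p : (PontryaginDual A × G) × A => (p.1.1, p.2)))
  · intro _ a _ ha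
    simp [apply_eq_zero_of_snd_notMem_image_tsupport (x := (_, a)) ha]

variable [MeasurableSpace G] [OpensMeasurableSpace G] (μG : Measure G)
  [IsFiniteMeasureOnCompacts μG]

theorem integrable_partialFourierTransform [R1Space G] (hF : Continuous F)
    (hFc : HasCompactSupport F) (χ : PontryaginDual A) :
    Integrable (partialFourierTransform μA F χ) μG :=
  ((continuous_partialFourierTransform μA hF hFc).comp
    (Continuous.prodMk_right χ)).integrable_of_hasCompactSupport <|
    HasCompactSupport.intro (hFc.image continuous_fst) fun _ hg =>
      partialFourierTransform_eq_zero_of_notMem μA hg χ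

theorem continuous_integral_norm_sub_partialFourierTransform (hF : Continuous F)
    (hFc : HasCompactSupport F) (χ₀ : PontryaginDual A) :
    Continuous fun χ =>
      ∫ g, ‖partialFourierTransform μA F χ g - partialFourierTransform μA F χ₀ g‖ ∂μG := by
  have hcont := continuous_partialFourierTransform μA hF hFc
  rw [← continuousOn_univ]
  refine continuousOn_integral_of_compact_support (hFc.image continuous_fst) ?_ ?_
  · exact (hcont.sub <| hcont.comp <|
      (Continuous.prodMk_right χ₀).comp continuous_snd).norm.continuousOn
  · intro χ g _ hg
    simp [partialFourierTransform_eq_zero_of_notMem μA hg]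

end PartialFourierTransform

theorem partial_fourier_transform_L1_continuous_general
    (G A : Type*)
    [TopologicalSpace G] [Group G] [IsTopologicalGroup G]
    [MeasurableSpace G] [BorelSpace G]
    [TopologicalSpace A] [CommGroup A] [LocallyCompactSpace A]
    [MeasurableSpace A] [BorelSpace A]
    (μG : Measure G) [μG.IsHaarMeasure]
    (μA : Measure A) [μA.IsHaarMeasure]
    (F : G × A → ℂ) (hF : Continuous F) (hFc : HasCompactSupport F) :
    (∀ χ : PontryaginDual A, Integrable (fun g => ∫ a, F (g, a) * (χ a : ℂ) ∂μA) μG) ∧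
    ∀ χ₀ : PontryaginDual A, ∀ ε > (0 : ℝ), ∃ U ∈ nhds χ₀, ∀ χ ∈ U,
      (∫ g, ‖(∫ a, F (g, a) * (χ a : ℂ) ∂μA) -
          ∫ a, F (g, a) * (χ₀ a : ℂ) ∂μA‖ ∂μG) < ε := by
  refine ⟨integrable_partialFourierTransform μA μG hF hFc, fun χ₀ ε hε => ?_⟩
  have hL1 := (continuous_integral_norm_sub_partialFourierTransform μA μG hF hFc χ₀).tendsto χ₀
  simp only [sub_self, norm_zero, integral_zero] at hL1
  exact (hL1.eventually_lt_const hε).exists_mem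

/-- The partial Fourier transform `F̂^A(χ)(g) = ∫_A F(g,a) χ(a) dμ_A(a)` of a compactly
supported continuous function `F` on `G × A` is an `L¹(G)`-valued function of the character
`χ`, continuous on the Pontryagin dual of `A` (continuity expressed via neighborhoods and the
`L¹`-distance). -/
theorem partial_fourier_transform_L1_continuous
    (G A : Type*)
    [TopologicalSpace G] [Group G] [IsTopologicalGroup G]
    [LocallyCompactSpace G] [SecondCountableTopology G]
    [MeasurableSpace G] [BorelSpace G]
    [TopologicalSpace A] [CommGroup A] [IsTopologicalGroup A]
    [LocallyCompactSpace A] [SecondCountableTopology A]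
    [MeasurableSpace A] [BorelSpace A]
    (μG : Measure G) [μG.IsHaarMeasure]
    (μA : Measure A) [μA.IsHaarMeasure]
    (F : G × A → ℂ) (hF : Continuous F) (hFc : HasCompactSupport F) :
    (∀ χ : PontryaginDual A, Integrable (fun g => ∫ a, F (g, a) * (χ a : ℂ) ∂μA) μG) ∧
    ∀ χ₀ : PontryaginDual A, ∀ ε > (0 : ℝ), ∃ U ∈ nhds χ₀, ∀ χ ∈ U,
      (∫ g, ‖(∫ a, F (g, a) * (χ a : ℂ) ∂μA) -
          ∫ a, F (g, a) * (χ₀ a : ℂ) ∂μA‖ ∂μG) < ε :=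
  partial_fourier_transform_L1_continuous_general G A μG μA F hF hFc
end
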